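/- arXiv:2005.09390 — 6 statements merged into one kernel-verified Lean document; each statement's English description precedes it below -/
import Mathlib

section
/- If T is a trap set containing a unique minimal nonempty trap set T_m (i.e., T_m is the only attractor contained in T), then any space of attraction of T is also a space of attraction of T_m. -/
/-- State space of a Boolean network on `n` variables. -/
abbrev State (n : ℕ) := Fin n → Bool

/-- Asynchronous dynamics: `x → y` iff `y` differs from `x` in exactly one
coordinate `i` and `y i = f x i`. -/
def AD {n : ℕ} (f : State n → State n) (x y : State n) : Prop :=
  ∃ i : Fin n, y i ≠ x i ∧ y i = f x i ∧ ∀ j : Fin n, j ≠ i → y j = x j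

/-- General asynchronous dynamics: `x → y` iff `x ≠ y` and every flipped
coordinate is updated according to `f`. -/
def GD {n : ℕ} (f : State n → State n) (x y : State n) : Prop :=
  x ≠ y ∧ ∀ i : Fin n, y i ≠ x i → y i = f x i

/-- Synchronous dynamics: the single edge `x → f x` whenever `f x ≠ x`. -/
def SD {n : ℕ} (f : State n → State n) (x y : State n) : Prop :=
  y = f x ∧ y ≠ x

/-- A trap set: a set closed under successors of the dynamics `D`. -/
def IsTrap {n : ℕ} (D : State n → State n → Prop) (T : Set (State n)) : Prop :=
  ∀ x ∈ T, ∀ y, D x y → y ∈ T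

/-- An attractor: a minimal nonempty trap set. -/
def IsAttractor {n : ℕ} (D : State n → State n → Prop) (A : Set (State n)) : Prop :=
  A.Nonempty ∧ IsTrap D A ∧ ∀ B ⊆ A, B.Nonempty → IsTrap D B → B = A

/-- The subspace `Σ(I, c) = {x : x i = c i for all i ∈ I}`. -/
def Subsp {n : ℕ} (I : Set (Fin n)) (c : State n) : Set (State n) :=
  {x | ∀ i ∈ I, x i = c i}

open Classical in
/-- The restriction `f↾Σ(I,c)`: coordinates of `I` are fixed to `c`,
the other coordinates follow `f`. -/
noncomputable def restr {n : ℕ} (f : State n → State n) (I : Set (Fin n)) (c : State n) :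
    State n → State n :=
  fun x i => if i ∈ I then c i else f x i

/-- `Ω` is a space of attraction of the trap set `T` in the dynamics `D`:
every trap set reachable from `Ω` meets `T`. -/
def IsSoA {n : ℕ} (D : State n → State n → Prop) (T Ω : Set (State n)) : Prop :=
  ∀ x ∈ Ω, ∀ S : Set (State n), IsTrap D S →
    (∃ y ∈ S, Relation.ReflTransGen D x y) → (S ∩ T).Nonempty

lemma exists_attractor_aux {n : ℕ} (D : State n → State n → Prop) :
    ∀ k : ℕ, ∀ C : Set (State n), C.ncard ≤ k → IsTrap D C → C.Nonempty →
      ∃ A ⊆ C, IsAttractor D A := by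
  intro k
  induction k with
  | zero =>
    intro C hc ht hne
    have : 0 < C.ncard := Set.ncard_pos (Set.toFinite C) |>.mpr hne
    omega
  | succ k ih =>
    intro C hc ht hne
    by_cases hmin : ∀ B ⊆ C, B.Nonempty → IsTrap D B → B = C
    · exact ⟨C, le_refl _, hne, ht, hmin⟩
    · push_neg at hmin
      obtain ⟨B, hBC, hBne, hBt, hBneq⟩ := hmin
      have hss : B ⊂ C := ⟨hBC, fun h => hBneq (Set.Subset.antisymm hBC h)⟩
      have hlt : B.ncard < C.ncard := Set.ncard_lt_ncard hss (Set.toFinite C)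
      obtain ⟨A, hAB, hA⟩ := ih B (by omega) hBt hBne
      exact ⟨A, hAB.trans hBC, hA⟩

/-- If `T` is a trap set whose only attractor is `Tm`, then any space of
attraction of `T` is also a space of attraction of `Tm`. -/
theorem stmt6 {n : ℕ} (D : State n → State n → Prop) (T Tm Ω : Set (State n))
    (hT : IsTrap D T) (hTm : IsAttractor D Tm) (hTmT : Tm ⊆ T)
    (huniq : ∀ A ⊆ T, IsAttractor D A → A = Tm)
    (hΩ : IsSoA D T Ω) :
    IsSoA D Tm Ω := by
  intro x hx S hS hreach
  obtain ⟨z, hzS, hzT⟩ := hΩ x hx S hS hreach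
  have hST : IsTrap D (S ∩ T) := by
    intro a ha b hab
    exact ⟨hS a ha.1 b hab, hT a ha.2 b hab⟩
  obtain ⟨A, hAST, hA⟩ := exists_attractor_aux D (S ∩ T).ncard (S ∩ T) le_rfl hST ⟨z, hzS, hzT⟩
  have hATm : A = Tm := huniq A (hAST.trans (Set.inter_subset_right)) hA
  obtain ⟨a, haA⟩ := hA.1
  exact ⟨a, (hAST haA).1, hATm ▸ haA⟩
end

section
/- Every space of attraction of an attractor A is contained in the strong basin of attraction of A: no state in the space of attraction has a path to a different attractor, and every state in the space of attraction has a path to A. -/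
/-- Every space of attraction of an attractor `A` is contained in the strong
basin of `A`: every state of it has a path to `A` and no path to a
different attractor. -/
theorem stmt7 {n : ℕ} (D : State n → State n → Prop) (A Ω : Set (State n))
    (hA : IsAttractor D A) (hΩ : IsSoA D A Ω) :
    ∀ x ∈ Ω, (∃ y ∈ A, Relation.ReflTransGen D x y) ∧
      ∀ A' : Set (State n), IsAttractor D A' → A' ≠ A →
        ¬ ∃ y ∈ A', Relation.ReflTransGen D x y := by
  intro x hx
  constructor
  · have h := hΩ x hx {z | Relation.ReflTransGen D x z}
      (fun a ha y hay => ha.tail hay) ⟨x, Relation.ReflTransGen.refl, Relation.ReflTransGen.refl⟩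
    obtain ⟨y, hy, hyA⟩ := h
    exact ⟨y, hyA, hy⟩
  · rintro A' hA' hne ⟨y, hyA', hxy⟩
    have h := hΩ x hx A' hA'.2.1 ⟨y, hyA', hxy⟩
    have hinter : (A' ∩ A).Nonempty := h
    have htrap : IsTrap D (A' ∩ A) := fun a ha z haz =>
      ⟨hA'.2.1 a ha.1 z haz, hA.2.1 a ha.2 z haz⟩
    have h1 := hA'.2.2 (A' ∩ A) Set.inter_subset_left hinter htrap
    have h2 := hA.2.2 (A' ∩ A) Set.inter_subset_right hinter htrap
    exact hne (h1 ▸ h2)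
end

section
/- (Lemma: soa_restr) The full state space B^n is a space of attraction of a trap set T in D(f) if and only if from every state x ∈ B^n there exists a path in D(f) to some element of T. -/
/-- (Lemma soa_restr) The full state space is a space of attraction of a trap
set `T` iff from every state there is a path to `T`. -/
theorem stmt8 {n : ℕ} (D : State n → State n → Prop) (T : Set (State n))
    (hT : IsTrap D T) :
    IsSoA D T Set.univ ↔ ∀ x : State n, ∃ y ∈ T, Relation.ReflTransGen D x y := by
  constructor
  · intro h x
    have htrap : IsTrap D {y | Relation.ReflTransGen D x y} := by
      intro a ha b hab
      exact Relation.ReflTransGen.tail ha hab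
    obtain ⟨z, hz1, hz2⟩ := h x trivial _ htrap ⟨x, Relation.ReflTransGen.refl, Relation.ReflTransGen.refl⟩
    exact ⟨z, hz2, hz1⟩
  · intro h x _ S hS ⟨y, hyS, hxy⟩
    obtain ⟨t, htT, hyt⟩ := h y
    have key : ∀ a b : State n, Relation.ReflTransGen D a b → a ∈ S → b ∈ S := by
      intro a b hab ha
      induction hab with
      | refl => exact ha
      | tail _ h ih => exact hS _ ih _ h
    exact ⟨t, key y t hyt hyS, htT⟩
end

section
/- (Lemma lemma_path, asynchronous case) Let f : B^n → B^n, c ∈ B^n, and W ⊆ U ⊆ {1,...,n} with S = Σ(U,c) ⊆ Ω = Σ(W,c). If for every s ∈ U \ W and every x ∈ Ω we have f_s(x) = c_s, then from every x ∈ Ω there exists a path in AD(f↾Ω) from x to some y ∈ S. -/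
/-- (Lemma lemma_path, asynchronous case) If every coordinate of `U \ W` is
forced to `c` on `Ω = Σ(W,c)`, then from every state of `Ω` there is a path in
`AD(f↾Ω)` to `S = Σ(U,c)`. -/
theorem stmt11 {n : ℕ} (f : State n → State n) (W U : Set (Fin n)) (c : State n)
    (hWU : W ⊆ U)
    (h : ∀ s ∈ U \ W, ∀ x ∈ Subsp W c, f x s = c s) :
    ∀ x ∈ Subsp W c, ∃ y ∈ Subsp U c,
      Relation.ReflTransGen (AD (restr f W c)) x y := by
  classical
  intro x hx
  set m : State n → ℕ := fun z => (Finset.univ.filter (fun i => i ∈ U ∧ z i ≠ c i)).card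
  generalize hk : m x = k
  induction k using Nat.strong_induction_on generalizing x with
  | _ k ih =>
    by_cases hS : x ∈ Subsp U c
    · exact ⟨x, hS, Relation.ReflTransGen.refl⟩
    · have : ∃ s, s ∈ U ∧ x s ≠ c s := by
        simpa [Subsp, not_forall] using hS
      obtain ⟨s, hsU, hsne⟩ := this
      have hsW : s ∉ W := fun hw => hsne (hx s hw)
      set y := Function.update x s (c s) with hy
      have hyΩ : y ∈ Subsp W c := by
        intro i hi
        by_cases his : i = s
        · simp [hy, his]
        · simp [hy, Function.update_of_ne his]; exact hx i hi
      have hstep : AD (restr f W c) x y := by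
        refine ⟨s, ?_, ?_, ?_⟩
        · simp [hy]; exact fun e => hsne e.symm
        · simp [hy, restr, hsW]
          exact (h s ⟨hsU, hsW⟩ x hx).symm
        · intro j hj; simp [hy, Function.update_of_ne hj]
      have hlt : m y < k := by
        rw [← hk]
        apply Finset.card_lt_card
        constructor
        · intro i hi
          simp only [Finset.mem_filter, Finset.mem_univ, true_and] at hi ⊢
          rcases hi with ⟨hiU, hine⟩
          have his : i ≠ s := by
            intro e; subst e; simp [hy] at hine
          rw [hy, Function.update_of_ne his] at hine
          exact ⟨hiU, hine⟩
        · intro hsub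
          have hmem : s ∈ Finset.univ.filter (fun i => i ∈ U ∧ x i ≠ c i) := by
            simp [Finset.mem_filter, hsU, hsne]
          have := hsub hmem
          simp [Finset.mem_filter, hy] at this
      obtain ⟨z, hz, hpath⟩ := ih (m y) hlt y hyΩ rfl
      exact ⟨z, hz, Relation.ReflTransGen.head hstep hpath⟩
end

section
/- (Lemma lemma_perc_1) Let T = Σ(U,c) be a trap space of f and Ω = Σ(W,c) a subspace with W ⊆ U (so T ⊆ Ω). If f_s(x) = c_s for every x ∈ Ω and every s ∈ U \ W, then Ω is a space of attraction of T in AD(f↾Ω): every trap set of AD(f↾Ω) intersects T. -/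
/-- (Lemma lemma_perc_1) If `T = Σ(U,c)` is a trap space, `W ⊆ U`, and every
coordinate of `U \ W` is forced to `c` on `Ω = Σ(W,c)`, then `Ω` is a space of
attraction of `T` in `AD(f↾Ω)`. -/
theorem stmt13 {n : ℕ} (f : State n → State n) (W U : Set (Fin n)) (c : State n)
    (hWU : W ⊆ U) (hTS : IsTrap (AD f) (Subsp U c))
    (h : ∀ s ∈ U \ W, ∀ x ∈ Subsp W c, f x s = c s) :
    IsSoA (AD (restr f W c)) (Subsp U c) (Subsp W c) := by
  classical
  intro x hx S hS hy
  obtain ⟨y, hyS, hxy⟩ := hy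
  set g := restr f W c with hg
  have hΩstep : ∀ a ∈ Subsp W c, ∀ b, AD g a b → b ∈ Subsp W c := by
    intro a ha b hb j hj
    obtain ⟨i, hne, hbi, hrest⟩ := hb
    by_cases hji : j = i
    · subst hji; rw [hbi]; simp [hg, restr, hj]
    · rw [hrest j hji]; exact ha j hj
  have hclose : ∀ (P : Set (State n)), IsTrap (AD g) P → ∀ a b : State n,
      Relation.ReflTransGen (AD g) a b → a ∈ P → b ∈ P := by
    intro P hP a b hab
    induction hab with
    | refl => exact id
    | tail _ hstep ih => exact fun ha => hP _ (ih ha) _ hstep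
  have hyΩ : y ∈ Subsp W c := hclose _ hΩstep x y hxy hx
  have key : ∀ m : ℕ, ∀ a ∈ Subsp W c,
      (Finset.univ.filter (fun i => i ∈ U ∧ a i ≠ c i)).card = m →
      ∃ z, z ∈ Subsp U c ∧ Relation.ReflTransGen (AD g) a z := by
    intro m
    induction m using Nat.strong_induction_on with
    | _ m ih =>
      intro a ha hcard
      by_cases hT : a ∈ Subsp U c
      · exact ⟨a, hT, Relation.ReflTransGen.refl⟩
      · have hex : ∃ s ∈ U, a s ≠ c s := by
          by_contra hcon
          push_neg at hcon
          exact hT hcon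
        obtain ⟨s, hsU, hs⟩ := hex
        have hsW : s ∉ W := fun hsW => hs (ha s hsW)
        set b := Function.update a s (c s) with hb
        have hstep : AD g a b := by
          refine ⟨s, ?_, ?_, ?_⟩
          · simp [hb, Function.update_self]
            exact fun e => hs e.symm
          · simp [hb, Function.update_self, hg, restr, hsW]
            exact (h s ⟨hsU, hsW⟩ a ha).symm
          · intro j hj; simp [hb, Function.update_of_ne hj]
        have hbΩ : b ∈ Subsp W c := hΩstep a ha b hstep
        have hsub : (Finset.univ.filter (fun i => i ∈ U ∧ b i ≠ c i)) ⊂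
            (Finset.univ.filter (fun i => i ∈ U ∧ a i ≠ c i)) := by
          constructor
          · intro j hj
            simp only [Finset.mem_filter, Finset.mem_univ, true_and] at hj ⊢
            by_cases hjs : j = s
            · exfalso; subst hjs
              exact hj.2 (by simp [hb, Function.update_self])
            · rw [hb, Function.update_of_ne hjs] at hj; exact hj
          · intro hcon
            have hmem : s ∈ (Finset.univ.filter (fun i => i ∈ U ∧ a i ≠ c i)) := by
              simp [hsU, hs]
            have := hcon hmem
            simp [hb, Function.update_self] at this
        have hlt : (Finset.univ.filter (fun i => i ∈ U ∧ b i ≠ c i)).card < m := by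
          rw [← hcard]; exact Finset.card_lt_card hsub
        obtain ⟨z, hzT, hzpath⟩ := ih _ hlt b hbΩ rfl
        exact ⟨z, hzT, Relation.ReflTransGen.head hstep hzpath⟩
  obtain ⟨z, hzT, hzpath⟩ := key _ y hyΩ rfl
  have hzS : z ∈ S := hclose S hS y z hzpath hyS
  exact ⟨z, hzS, hzT⟩
end

section
/- (Proposition perc_soa, iterated percolation) Let T = Σ(U,c) be a trap space of f and Ω = Σ(W,c) with W ⊆ U. Define I_0 = W and I_{k+1} = { s ∈ U : s ∈ I_k or f_s(x) = c_s for all x ∈ Σ(I_k,c) }. If I_{k_T} = U for some k_T, then from every x ∈ Ω there is a path in AD(f↾Ω) to T; hence Ω is a space of attraction of T in AD(f↾Ω). -/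
/-- (Proposition perc_soa) Iterated percolation: if the percolation sequence
starting at `W` reaches `U`, then every state of `Ω = Σ(W,c)` has a path in
`AD(f↾Ω)` to the trap space `T = Σ(U,c)`; hence `Ω` is a space of attraction
of `T` in `AD(f↾Ω)`. -/
theorem stmt14 {n : ℕ} (f : State n → State n) (W U : Set (Fin n)) (c : State n)
    (hWU : W ⊆ U) (hTS : IsTrap (AD f) (Subsp U c))
    (Iseq : ℕ → Set (Fin n)) (h0 : Iseq 0 = W)
    (hstep : ∀ k, Iseq (k + 1) =
      {s | s ∈ U ∧ (s ∈ Iseq k ∨ ∀ x ∈ Subsp (Iseq k) c, f x s = c s)})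
    (hend : ∃ kT, Iseq kT = U) :
    (∀ x ∈ Subsp W c, ∃ y ∈ Subsp U c,
      Relation.ReflTransGen (AD (restr f W c)) x y) ∧
    IsSoA (AD (restr f W c)) (Subsp U c) (Subsp W c) := by
  classical
  obtain ⟨kT, hkT⟩ := hend
  have hsubU : ∀ k, Iseq k ⊆ U := by
    intro k
    cases k with
    | zero => rw [h0]; exact hWU
    | succ k => rw [hstep]; intro s hs; exact hs.1
  have hmono : ∀ k, Iseq k ⊆ Iseq (k + 1) := by
    intro k s hs
    rw [hstep]; exact ⟨hsubU k hs, Or.inl hs⟩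
  have hW : ∀ k, W ⊆ Iseq k := by
    intro k; induction k with
    | zero => rw [h0]
    | succ k ih => exact ih.trans (hmono k)
  set g := restr f W c with hg
  have key : ∀ k, ∀ x ∈ Subsp (Iseq k) c, ∃ y ∈ Subsp (Iseq (k + 1)) c,
      Relation.ReflTransGen (AD g) x y := by
    intro k
    have H : ∀ m : ℕ, ∀ x ∈ Subsp (Iseq k) c,
        (Finset.univ.filter (fun i => i ∈ Iseq (k + 1) ∧ x i ≠ c i)).card ≤ m →
        ∃ y ∈ Subsp (Iseq (k + 1)) c, Relation.ReflTransGen (AD g) x y := by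
      intro m
      induction m with
      | zero =>
        intro x hx hcard
        refine ⟨x, ?_, .refl⟩
        intro i hi
        by_contra h
        have hmem : i ∈ Finset.univ.filter (fun i => i ∈ Iseq (k + 1) ∧ x i ≠ c i) := by
          simp [hi, h]
        rw [Finset.card_eq_zero.mp (Nat.le_zero.mp hcard)] at hmem
        simp at hmem
      | succ m ih =>
        intro x hx hcard
        by_cases hall : ∀ i ∈ Iseq (k + 1), x i = c i
        · exact ⟨x, hall, .refl⟩
        · push_neg at hall
          obtain ⟨s, hs, hxs⟩ := hall
          have hsk : s ∉ Iseq k := fun h => hxs (hx s h)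
          have hperc : f x s = c s := by
            have h2 := hstep k
            rw [h2] at hs
            rcases hs.2 with h | h
            · exact absurd h hsk
            · exact h x hx
          have hs' : s ∈ Iseq (k + 1) := by rw [hstep] at hs ⊢; exact hs
          have hsW : s ∉ W := fun h => hsk (hW k h)
          set x' := Function.update x s (c s) with hx'
          have hAD : AD g x x' := by
            refine ⟨s, ?_, ?_, ?_⟩
            · simpa [hx'] using fun h => hxs h.symm
            · simp [hx', hg, restr, hsW, hperc]
            · intro j hj; simp [hx', Function.update_of_ne hj]
          have hx'mem : x' ∈ Subsp (Iseq k) c := by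
            intro i hi
            rcases eq_or_ne i s with rfl | h
            · exact absurd hi hsk
            · simp [hx', Function.update_of_ne h, hx i hi]
          have hcard' :
              (Finset.univ.filter (fun i => i ∈ Iseq (k + 1) ∧ x' i ≠ c i)).card ≤ m := by
            have hsub : Finset.univ.filter (fun i => i ∈ Iseq (k + 1) ∧ x' i ≠ c i) ⊆
                (Finset.univ.filter (fun i => i ∈ Iseq (k + 1) ∧ x i ≠ c i)).erase s := by
              intro i hi
              simp only [Finset.mem_filter, Finset.mem_univ, true_and] at hi
              rcases eq_or_ne i s with rfl | h
              · simp [hx'] at hi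
              · refine Finset.mem_erase.mpr ⟨h, ?_⟩
                simp only [Finset.mem_filter, Finset.mem_univ, true_and]
                rw [hx', Function.update_of_ne h] at hi
                exact hi
            have hsmem : s ∈ Finset.univ.filter (fun i => i ∈ Iseq (k + 1) ∧ x i ≠ c i) := by
              simp [hs', hxs]
            calc (Finset.univ.filter (fun i => i ∈ Iseq (k + 1) ∧ x' i ≠ c i)).card
                ≤ _ := Finset.card_le_card hsub
              _ = _ - 1 := Finset.card_erase_of_mem hsmem
              _ ≤ m := by omega
          obtain ⟨y, hy, hpath⟩ := ih x' hx'mem hcard'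
          exact ⟨y, hy, Relation.ReflTransGen.head hAD hpath⟩
    intro x hx
    exact H _ x hx le_rfl
  have main : ∀ x ∈ Subsp W c, ∃ y ∈ Subsp U c, Relation.ReflTransGen (AD g) x y := by
    intro x hx
    have step : ∀ k, ∃ y ∈ Subsp (Iseq k) c, Relation.ReflTransGen (AD g) x y := by
      intro k; induction k with
      | zero => exact ⟨x, by rw [h0]; exact hx, .refl⟩
      | succ k ih =>
        obtain ⟨y, hy, hp⟩ := ih
        obtain ⟨z, hz, hp'⟩ := key k y hy
        exact ⟨z, hz, hp.trans hp'⟩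
    obtain ⟨y, hy, hp⟩ := step kT
    exact ⟨y, by rwa [hkT] at hy, hp⟩
  refine ⟨main, ?_⟩
  have trapClosed : ∀ (T' : Set (State n)), IsTrap (AD g) T' →
      ∀ a ∈ T', ∀ b, Relation.ReflTransGen (AD g) a b → b ∈ T' := by
    intro T' hT' a ha b hab
    induction hab with
    | refl => exact ha
    | tail _ h ih => exact hT' _ ih _ h
  have hΩtrap : IsTrap (AD g) (Subsp W c) := by
    intro a ha b hab
    obtain ⟨i, hne, hbi, hrest⟩ := hab
    intro j hj
    rcases eq_or_ne j i with rfl | h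
    · rw [hbi]; simp [hg, restr, hj]
    · rw [hrest j h]; exact ha j hj
  rintro x hx S hS ⟨y, hyS, hxy⟩
  have hyΩ : y ∈ Subsp W c := trapClosed _ hΩtrap x hx y hxy
  obtain ⟨z, hz, hp⟩ := main y hyΩ
  exact ⟨z, trapClosed _ hS y hyS z hp, hz⟩
end
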